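/- Let S be a finite set with positive real weights w and let m ≥ 1 with m + 1 ≤ |S|. Then the weighted elementary symmetric sums are log-concave at m: (e_m(S; w))² ≥ e_{m+1}(S; w) · e_{m-1}(S; w). -/

import Mathlib

/-!
Adjoining an element `x` of weight `c` to `S` turns the sequence `a_k = e_k(S; w)` into
`b_k = a_k + c a_{k-1}`, the convolution of `a` with `(1, c)`. A nonnegative log-concave sequence
without internal zeros also satisfies the cross inequality `a_{k+3} a_k ≤ a_{k+2} a_{k+1}`, and
expanding `b_{k+1}² - b_{k+2} b_k` shows it is a nonnegative combination of the log-concavity and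
cross inequalities of `a`. Induction on `S` finishes the proof.
-/

/-- Weighted elementary symmetric sum: `e_m(S; w) = Σ_{T̂ ⊆ S, |T̂| = m} ∏_{j ∈ T̂} w_j`. -/
noncomputable def esymm {ι : Type*} (S : Finset ι) (w : ι → ℝ) (m : ℕ) : ℝ :=
  ∑ T ∈ S.powersetCard m, ∏ j ∈ T, w j

section LogConcave

variable {R : Type*} [CommRing R] [LinearOrder R] [IsStrictOrderedRing R]

def IsLogConcave (a : ℕ → R) : Prop :=
  ∀ n, a (n + 2) * a n ≤ a (n + 1) ^ 2

variable {a : ℕ → R}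

theorem IsLogConcave.mul_le_mul_succ (hlc : IsLogConcave a) (ha : ∀ n, 0 ≤ a n)
    (hzero : ∀ n, a n = 0 → a (n + 1) = 0) (k : ℕ) :
    a (k + 3) * a k ≤ a (k + 2) * a (k + 1) := by
  rcases (ha (k + 1)).eq_or_lt with h1 | h1
  · rw [hzero _ (hzero _ h1.symm), zero_mul]
    exact mul_nonneg (ha _) (ha _)
  rcases (ha (k + 2)).eq_or_lt with h2 | h2
  · rw [hzero _ h2.symm, zero_mul]
    exact mul_nonneg (ha _) (ha _)
  have hprod : a (k + 3) * a k * (a (k + 2) * a (k + 1)) ≤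
      (a (k + 2) * a (k + 1)) * (a (k + 2) * a (k + 1)) := by
    calc a (k + 3) * a k * (a (k + 2) * a (k + 1))
        = (a (k + 3) * a (k + 1)) * (a (k + 2) * a k) := by ring
      _ ≤ a (k + 2) ^ 2 * a (k + 1) ^ 2 :=
        mul_le_mul (hlc (k + 1)) (hlc k) (mul_nonneg (ha _) (ha _)) (sq_nonneg _)
      _ = (a (k + 2) * a (k + 1)) * (a (k + 2) * a (k + 1)) := by ring
  exact le_of_mul_le_mul_right hprod (mul_pos h2 h1)

theorem IsLogConcave.of_add_mul_prev (hlc : IsLogConcave a) (ha : ∀ n, 0 ≤ a n)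
    (hzero : ∀ n, a n = 0 → a (n + 1) = 0) {c : R} (hc : 0 ≤ c) {b : ℕ → R}
    (hb₀ : b 0 = a 0) (hb : ∀ n, b (n + 1) = a (n + 1) + c * a n) : IsLogConcave b := by
  rintro (_ | n)
  · rw [hb, hb, hb₀]
    nlinarith [hlc 0, mul_nonneg hc (mul_nonneg (ha 0) (ha 1)), sq_nonneg (c * a 0)]
  · rw [hb, hb, hb]
    nlinarith [hlc (n + 1), mul_le_mul_of_nonneg_left (hlc.mul_le_mul_succ ha hzero n) hc,
      mul_le_mul_of_nonneg_left (hlc n) (mul_nonneg hc hc)]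

end LogConcave

section esymm

variable {ι : Type*} {S : Finset ι} {w : ι → ℝ}

@[simp]
theorem esymm_zero (S : Finset ι) (w : ι → ℝ) : esymm S w 0 = 1 := by
  simp [esymm]

theorem esymm_eq_zero_of_card_lt {m : ℕ} (hm : S.card < m) : esymm S w m = 0 := by
  rw [esymm, Finset.powersetCard_eq_empty.2 hm, Finset.sum_empty]

theorem esymm_pos (hw : ∀ j ∈ S, 0 < w j) {m : ℕ} (hm : m ≤ S.card) : 0 < esymm S w m := by
  refine Finset.sum_pos (fun T hT => Finset.prod_pos fun j hj => ?_)
    (Finset.powersetCard_nonempty.2 hm)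
  exact hw j ((Finset.mem_powersetCard.1 hT).1 hj)

theorem esymm_nonneg (hw : ∀ j ∈ S, 0 < w j) (m : ℕ) : 0 ≤ esymm S w m := by
  rcases le_or_gt m S.card with hm | hm
  · exact (esymm_pos hw hm).le
  · exact (esymm_eq_zero_of_card_lt hm).ge

theorem esymm_succ_eq_zero (hw : ∀ j ∈ S, 0 < w j) {m : ℕ} (h : esymm S w m = 0) :
    esymm S w (m + 1) = 0 :=
  esymm_eq_zero_of_card_lt <| Nat.lt_succ_of_lt <| not_le.1 fun hm => (esymm_pos hw hm).ne' h

theorem esymm_insert [DecidableEq ι] {x : ι} (hx : x ∉ S) (n : ℕ) :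
    esymm (insert x S) w (n + 1) = esymm S w (n + 1) + w x * esymm S w n := by
  have hxT : ∀ T ∈ S.powersetCard n, x ∉ T := fun T hT h =>
    hx ((Finset.mem_powersetCard.1 hT).1 h)
  have hdisj : Disjoint (S.powersetCard (n + 1)) ((S.powersetCard n).image (insert x)) := by
    refine Finset.disjoint_left.2 fun T hT hT' => ?_
    obtain ⟨U, -, rfl⟩ := Finset.mem_image.1 hT'
    exact hx ((Finset.mem_powersetCard.1 hT).1 (Finset.mem_insert_self x U))
  have hinj : Set.InjOn (insert x) (S.powersetCard n : Set (Finset ι)) := fun T hT U hU hTU => by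
    rw [← Finset.erase_insert (hxT T hT), ← Finset.erase_insert (hxT U hU), hTU]
  rw [esymm, Finset.powersetCard_succ_insert hx, Finset.sum_union hdisj, Finset.sum_image hinj,
    esymm, esymm, Finset.mul_sum]
  exact congrArg _ (Finset.sum_congr rfl fun T hT => Finset.prod_insert (hxT T hT))

theorem esymm_isLogConcave (hw : ∀ j ∈ S, 0 < w j) : IsLogConcave (esymm S w) := by
  classical
  induction S using Finset.induction_on with
  | empty =>
    intro n
    rw [esymm_eq_zero_of_card_lt (by simp), zero_mul]
    exact sq_nonneg _
  | insert x S hx ih =>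
    have hwS : ∀ j ∈ S, 0 < w j := fun j hj => hw j (Finset.mem_insert_of_mem hj)
    exact (ih hwS).of_add_mul_prev (esymm_nonneg hwS) (fun _ => esymm_succ_eq_zero hwS)
      (hw x (Finset.mem_insert_self x S)).le (by simp) (esymm_insert hx)

end esymm

theorem esymm_sq_ge_mul_general {ι : Type*} (S : Finset ι) (w : ι → ℝ)
    (hw : ∀ j ∈ S, 0 < w j) (m : ℕ) (hm : 1 ≤ m) :
    esymm S w (m + 1) * esymm S w (m - 1) ≤ (esymm S w m) ^ 2 := by
  obtain ⟨n, rfl⟩ : ∃ n, m = n + 1 := ⟨m - 1, by omega⟩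
  exact esymm_isLogConcave hw n

/-- For a finite set `S` with positive weights and `1 ≤ m`, `m + 1 ≤ |S|`, the weighted
elementary symmetric sums are log-concave at `m`:
`(e_m(S; w))² ≥ e_{m+1}(S; w) · e_{m-1}(S; w)`. -/
theorem esymm_sq_ge_mul {ι : Type*} (S : Finset ι) (w : ι → ℝ)
    (hw : ∀ j ∈ S, 0 < w j) (m : ℕ) (hm : 1 ≤ m) (hcard : m + 1 ≤ S.card) :
    esymm S w (m + 1) * esymm S w (m - 1) ≤ (esymm S w m) ^ 2 :=
  esymm_sq_ge_mul_general S w hw m hm
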